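/- Let $h,q$ be coprime integers with $q > 2$. For $s \in \mathbf{C}$ with $\Re(s) > 1$, one has the representation $L(s, \psi_{h/q}) = \Big(\prod_{\chi \bmod q,\ \chi \ne \chi_0} L(s, \overline{\chi})^{\tau(\chi)\overline{\chi(h)}/\phi(q)}\Big) \cdot \zeta(s)^{\mu(q)/\phi(q)} \cdot e^{U_{h,q}(s)}$, where $U_{h,q}(s) := -\frac{\mu(q)}{\phi(q)}\sum_{p \mid q}\sum_{k=1}^\infty \frac{1}{k p^{sk}} + \sum_{p \mid q}\sum_{k=1}^\infty \frac{e^{2\pi i h p^k/q}}{k\, p^{sk}} + \sum_{p}\sum_{k=2}^\infty \frac{e^{2\pi i p h k/q} - e^{2\pi i p^k h/q}}{k\, p^{sk}}$, and the complex powers are defined via the principal branch of the logarithms $\log L(s,\overline{\chi})$, $\log \zeta(s)$ given by the absolutely convergent prime-power sums in $\Re(s) > 1$. -/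

import Mathlib

open Complex Finset Filter Asymptotics intervalIntegral
open scoped Real Topology Classical

noncomputable section

/-- The additive prime divisor function `A(n) = ∑_{p^α ∥ n} α p`. -/
def Apd (n : ℕ) : ℕ := n.factorization.sum fun p a => a * p

/-- The completely multiplicative function `ψ_{h/q}(n) = e^{2πi h A(n)/q}`. -/
def psiA (h : ℤ) (q : ℕ) (n : ℕ) : ℂ :=
  Complex.exp (2 * (Real.pi : ℂ) * Complex.I * (h : ℂ) * (Apd n : ℂ) / (q : ℂ))

/-- The summatory function `∑_{n ≤ x} ψ_{h/q}(n)`. -/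
def Spsi (h : ℤ) (q : ℕ) (x : ℝ) : ℂ := ∑ n ∈ Finset.Icc 1 ⌊x⌋₊, psiA h q n

/-- The Dirichlet series `L(s, ψ_{h/q})`. -/
def Lpsi (h : ℤ) (q : ℕ) (s : ℂ) : ℂ := ∑' n : ℕ, psiA h q n / (n : ℂ) ^ s

/-- the ratio μ(q)/φ(q) -/
def mphi (q : ℕ) : ℝ := (ArithmeticFunction.moebius q : ℝ) / (Nat.totient q : ℝ)

/-- Gauss sum τ(χ) = ∑_{ℓ mod q} χ(ℓ) e^{2πiℓ/q}. -/
def gaussS {q : ℕ} (χ : DirichletCharacter ℂ q) : ℂ :=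
  ∑ l ∈ Finset.range q, χ (l : ZMod q) * Complex.exp (2 * (Real.pi : ℂ) * Complex.I * (l : ℂ) / (q : ℂ))

/-- conjugate Dirichlet character -/
def conjChar {q : ℕ} (χ : DirichletCharacter ℂ q) : DirichletCharacter ℂ q :=
  χ.ringHomComp (starRingEnd ℂ)

/-- `T_{h,q}(s) = ∑_p ∑_{k ≥ 2} (e^{2πiphk/q} - e^{2πip^k h/q})/(k p^{sk})`. -/
def Thq (h : ℤ) (q : ℕ) (s : ℂ) : ℂ :=
  ∑' (p : Nat.Primes) (k : ℕ),
    (Complex.exp (2 * (Real.pi : ℂ) * Complex.I * ((p : ℕ) : ℂ) * (h : ℂ) * ((k : ℂ) + 2) / (q : ℂ))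
      - Complex.exp (2 * (Real.pi : ℂ) * Complex.I * (((p : ℕ) : ℂ) ^ (k + 2)) * (h : ℂ) / (q : ℂ)))
      / (((k : ℂ) + 2) * ((p : ℕ) : ℂ) ^ (s * ((k : ℂ) + 2)))

/-- `U_{h,q}(s)`. -/
def Uhq (h : ℤ) (q : ℕ) (s : ℂ) : ℂ :=
  -((mphi q : ℝ) : ℂ) * ∑ p ∈ q.primeFactors, ∑' k : ℕ,
      1 / (((k : ℂ) + 1) * (p : ℂ) ^ (s * ((k : ℂ) + 1)))
  + ∑ p ∈ q.primeFactors, ∑' k : ℕ,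
      Complex.exp (2 * (Real.pi : ℂ) * Complex.I * (h : ℂ) * ((p : ℂ) ^ (k + 1)) / (q : ℂ))
        / (((k : ℂ) + 1) * (p : ℂ) ^ (s * ((k : ℂ) + 1)))
  + Thq h q s

/-- log of a Dirichlet L-function as absolutely convergent prime-power sum, for Re(s) > 1. -/
def plogChar {q : ℕ} (χ : DirichletCharacter ℂ q) (s : ℂ) : ℂ :=
  ∑' (p : Nat.Primes) (k : ℕ),
    χ (((p : ℕ) : ZMod q)) ^ (k + 1) / (((k : ℂ) + 1) * ((p : ℕ) : ℂ) ^ (s * ((k : ℂ) + 1)))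

/-- log of the Riemann zeta function as prime-power sum, for Re(s) > 1. -/
def plogZeta (s : ℂ) : ℂ :=
  ∑' (p : Nat.Primes) (k : ℕ),
    1 / (((k : ℂ) + 1) * ((p : ℕ) : ℂ) ^ (s * ((k : ℂ) + 1)))

/-- log L(s, ψ_{h/q}) = ∑_p ∑_{k≥1} e^{2πiphk/q}/(k p^{sk}). -/
def plogPsi (h : ℤ) (q : ℕ) (s : ℂ) : ℂ :=
  ∑' (p : Nat.Primes) (k : ℕ),
    Complex.exp (2 * (Real.pi : ℂ) * Complex.I * ((p : ℕ) : ℂ) * (h : ℂ) * ((k : ℂ) + 1) / (q : ℂ))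
      / (((k : ℂ) + 1) * ((p : ℕ) : ℂ) ^ (s * ((k : ℂ) + 1)))

/-- the sum ∑_p ∑_{k≥1} e^{2πi h p^k/q}/(k p^{sk}). -/
def plogPsiAlt (h : ℤ) (q : ℕ) (s : ℂ) : ℂ :=
  ∑' (p : Nat.Primes) (k : ℕ),
    Complex.exp (2 * (Real.pi : ℂ) * Complex.I * (h : ℂ) * (((p : ℕ) : ℂ) ^ (k + 1)) / (q : ℂ))
      / (((k : ℂ) + 1) * ((p : ℕ) : ℂ) ^ (s * ((k : ℂ) + 1)))

end

/-!
Taking logarithms in the Euler product of the completely multiplicative `ψ_{h/q}` gives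
`log L(s, ψ) = ∑_p ∑_k e(phk/q) / (k p^{ks})`. Replacing `e(phk/q)` by `e(hp^k/q)` costs exactly
`T_{h,q}(s)`, the two agreeing at `k = 1`. For `p ∤ q` the residue `hp^k` is a unit mod `q`, and
expanding the additive character in multiplicative ones gives
`e(hp^k/q) = φ(q)⁻¹ ∑_χ τ(χ) χ̄(h) χ̄(p)^k` with `τ(χ₀) = μ(q)`; summed over `p` and `k`,
the term of `χ ≠ χ₀` becomes `log L(s, χ̄)` and that of `χ₀` becomes `log ζ(s)`. The primes
`p ∣ q`, at which `χ̄(p) = 0` and the expansion fails, are corrected by the first two sums of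
`U_{h,q}(s)`.
-/

noncomputable def primePowerDen (s : ℂ) (p k : ℕ) : ℂ :=
  ((k : ℂ) + 1) * (p : ℂ) ^ (s * ((k : ℂ) + 1))

lemma norm_div_primePowerDen_le {s : ℂ} (hs : 1 ≤ s.re) {p : ℕ} (hp : 2 ≤ p) (k : ℕ) {a : ℂ}
    {C : ℝ} (ha : ‖a‖ ≤ C) :
    ‖a / primePowerDen s p k‖ ≤ C * ((p : ℝ) ^ (-s.re) * (1 / 2) ^ k) := by
  have hp0 : (0 : ℝ) < p := by positivity
  set P : ℝ := (p : ℝ) ^ s.re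
  have hP : 2 ≤ P := calc
    (2 : ℝ) ≤ p := by exact_mod_cast hp
    _ ≤ P := Real.self_le_rpow_of_one_le (by exact_mod_cast (by omega : 1 ≤ p)) hs
  have hden : ‖primePowerDen s p k‖ = ((k : ℝ) + 1) * P ^ (k + 1) := by
    rw [primePowerDen, norm_mul, norm_natCast_cpow_of_pos (by omega)]
    norm_cast
    rw [Nat.cast_succ, mul_re, natCast_re, natCast_im, mul_zero, sub_zero,
      Real.rpow_mul hp0.le, ← Real.rpow_natCast _ (k + 1), Nat.cast_succ]
  have hgrow : P * 2 ^ k ≤ ((k : ℝ) + 1) * P ^ (k + 1) := calc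
    P * 2 ^ k ≤ P * P ^ k := by gcongr
    _ = 1 * P ^ (k + 1) := by ring
    _ ≤ _ := by gcongr; linarith [k.cast_nonneg (α := ℝ)]
  have hC : 0 ≤ C := (norm_nonneg a).trans ha
  rw [norm_div, hden, Real.rpow_neg hp0.le, one_div, inv_pow, ← mul_inv, ← div_eq_mul_inv]
  exact div_le_div₀ hC ha (by positivity) hgrow

lemma summable_div_primePowerDen {s : ℂ} (hs : 1 ≤ s.re) {p : ℕ} (hp : 2 ≤ p) {a : ℕ → ℂ}
    {C : ℝ} (ha : ∀ k, ‖a k‖ ≤ C) : Summable fun k ↦ a k / primePowerDen s p k :=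
  .of_norm_bounded ((summable_geometric_two.mul_left _).mul_left C)
    fun k ↦ norm_div_primePowerDen_le hs hp k (ha k)

/-- `∑_p ∑_{k ≥ 1} a_p(k) / (k p^{ks})`, with `a_p(k)` stored at `k - 1`. -/
noncomputable def primePowerSum (s : ℂ) (a : Nat.Primes → ℕ → ℂ) : ℂ :=
  ∑' (p : Nat.Primes) (k : ℕ), a p k / primePowerDen s p k

def PrimePowerSummable (s : ℂ) (a : Nat.Primes → ℕ → ℂ) : Prop :=
  Summable fun x : Nat.Primes × ℕ ↦ a x.1 x.2 / primePowerDen s x.1 x.2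

section primePowerSum

variable {s : ℂ} {a b : Nat.Primes → ℕ → ℂ}

lemma primePowerSummable_of_norm_le (hs : 1 < s.re) {C : ℝ} (ha : ∀ p k, ‖a p k‖ ≤ C) :
    PrimePowerSummable s a := by
  have hprimes : Summable fun p : Nat.Primes ↦ ((p : ℕ) : ℝ) ^ (-s.re) :=
    Nat.Primes.summable_rpow.2 (by linarith)
  refine .of_norm_bounded ((hprimes.mul_of_nonneg summable_geometric_two (fun _ ↦ by positivity)
    (fun _ ↦ by positivity)).mul_left C) fun x ↦ ?_
  exact norm_div_primePowerDen_le hs.le x.1.prop.two_le x.2 (ha x.1 x.2)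

lemma PrimePowerSummable.add (ha : PrimePowerSummable s a) (hb : PrimePowerSummable s b) :
    PrimePowerSummable s fun p k ↦ a p k + b p k := by
  simpa only [PrimePowerSummable, add_div] using Summable.add ha hb

lemma PrimePowerSummable.sum {ι : Type*} {t : Finset ι} {a : ι → Nat.Primes → ℕ → ℂ}
    (ha : ∀ i ∈ t, PrimePowerSummable s (a i)) :
    PrimePowerSummable s fun p k ↦ ∑ i ∈ t, a i p k := by
  simpa only [PrimePowerSummable, sum_div] using summable_sum ha

lemma PrimePowerSummable.primePowerSum_eq (ha : PrimePowerSummable s a) :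
    primePowerSum s a = ∑' x : Nat.Primes × ℕ, a x.1 x.2 / primePowerDen s x.1 x.2 :=
  (Summable.tsum_prod_uncurry (f := fun p k ↦ a p k / primePowerDen s p k) ha
    ha.prod_factor).symm

lemma primePowerSum_add (ha : PrimePowerSummable s a) (hb : PrimePowerSummable s b) :
    primePowerSum s (fun p k ↦ a p k + b p k) = primePowerSum s a + primePowerSum s b := by
  rw [ha.primePowerSum_eq, hb.primePowerSum_eq, (ha.add hb).primePowerSum_eq,
    ← Summable.tsum_add ha hb]
  exact tsum_congr fun x ↦ add_div _ _ _

lemma primePowerSum_sum {ι : Type*} {t : Finset ι} {a : ι → Nat.Primes → ℕ → ℂ}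
    (ha : ∀ i ∈ t, PrimePowerSummable s (a i)) :
    primePowerSum s (fun p k ↦ ∑ i ∈ t, a i p k) = ∑ i ∈ t, primePowerSum s (a i) := by
  rw [(PrimePowerSummable.sum ha).primePowerSum_eq,
    sum_congr rfl fun i hi ↦ (ha i hi).primePowerSum_eq, ← Summable.tsum_finsetSum ha]
  exact tsum_congr fun x ↦ sum_div _ _ _

lemma primePowerSum_const_mul (c : ℂ) :
    primePowerSum s (fun p k ↦ c * a p k) = c * primePowerSum s a := by
  simp only [primePowerSum, mul_div_assoc, tsum_mul_left]

lemma primePowerSum_const (c : ℂ) :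
    primePowerSum s (fun _ _ ↦ c) = c * primePowerSum s (fun _ _ ↦ 1) := by
  simp only [primePowerSum, ← tsum_mul_left, mul_one_div]

lemma primePowerSum_ite_dvd {q : ℕ} (hq : q ≠ 0) (a : ℕ → ℕ → ℂ) :
    primePowerSum s (fun p k ↦ if (p : ℕ) ∣ q then a p k else 0)
      = ∑ p ∈ q.primeFactors, ∑' k, a p k / primePowerDen s p k := by
  set F : ℕ → ℂ := fun n ↦ if n ∈ q.primeFactors then ∑' k, a n k / primePowerDen s n k else 0
  have hF (p : Nat.Primes) :
      ∑' k, (if (p : ℕ) ∣ q then a p k else 0) / primePowerDen s p k = F p := by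
    simp only [F, Nat.mem_primeFactors_of_ne_zero hq, p.prop, true_and]
    split_ifs <;> simp
  have hsupp : Function.support F ⊆ {p | p.Prime} := fun n hn ↦ by
    by_contra hn'
    exact hn (if_neg fun h ↦ hn' (Nat.prime_of_mem_primeFactors h))
  rw [primePowerSum, tsum_congr hF]
  refine (tsum_subtype_eq_of_support_subset hsupp).trans ?_
  rw [tsum_eq_sum (s := q.primeFactors) fun n hn ↦ if_neg hn]
  exact sum_congr rfl fun n hn ↦ if_pos hn

end primePowerSum

lemma Apd_mul {m n : ℕ} (hm : m ≠ 0) (hn : n ≠ 0) : Apd (m * n) = Apd m + Apd n := by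
  rw [Apd, Nat.factorization_mul hm hn]
  exact Finsupp.sum_add_index' (fun _ ↦ zero_mul _) fun _ _ _ ↦ add_mul _ _ _

lemma Apd_prime {p : ℕ} (hp : p.Prime) : Apd p = p := by
  simp [Apd, hp.factorization]

lemma psiA_mul (h : ℤ) (q : ℕ) {m n : ℕ} (hm : m ≠ 0) (hn : n ≠ 0) :
    psiA h q (m * n) = psiA h q m * psiA h q n := by
  rw [psiA, psiA, psiA, Apd_mul hm hn, ← Complex.exp_add]
  push_cast
  ring_nf

lemma norm_psiA (h : ℤ) (q n : ℕ) : ‖psiA h q n‖ = 1 := by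
  rw [psiA, Complex.norm_exp]
  simp

/-- `n ↦ ψ_{h/q}(n) n^{-s}`; although `psiA h q 0 = 1`, the factor `0 ^ s = 0` makes it vanish
at `0`, as a `MonoidWithZeroHom` must. -/
noncomputable def psiSummand (h : ℤ) (q : ℕ) {s : ℂ} (hs : s ≠ 0) : ℕ →*₀ ℂ where
  toFun n := psiA h q n / (n : ℂ) ^ s
  map_zero' := by simp [zero_cpow hs]
  map_one' := by simp [psiA, Apd]
  map_mul' m n := by
    rcases eq_or_ne m 0 with rfl | hm
    · simp [zero_cpow hs]
    rcases eq_or_ne n 0 with rfl | hn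
    · simp [zero_cpow hs]
    simp only [Nat.cast_mul, natCast_mul_natCast_cpow, psiA_mul h q hm hn, mul_div_mul_comm]

lemma norm_psiSummand (h : ℤ) (q : ℕ) {s : ℂ} (hs : s ≠ 0) {n : ℕ} (hn : n ≠ 0) :
    ‖psiSummand h q hs n‖ = (n : ℝ) ^ (-s.re) := by
  simp only [psiSummand, MonoidWithZeroHom.coe_mk, ZeroHom.coe_mk]
  rw [norm_div, norm_psiA, norm_natCast_cpow_of_pos (Nat.pos_of_ne_zero hn),
    Real.rpow_neg n.cast_nonneg, one_div]

lemma Lpsi_eq_exp_plogPsi (h : ℤ) (q : ℕ) {s : ℂ} (hs : 1 < s.re) :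
    Lpsi h q s = exp (plogPsi h q s) := by
  have hs0 : s ≠ 0 := ne_zero_of_one_lt_re hs
  set f := psiSummand h q hs0
  have hsum : Summable fun n ↦ ‖f n‖ := by
    refine .of_norm_bounded_eventually_nat (Real.summable_nat_rpow.2 (by linarith : -s.re < -1)) ?_
    filter_upwards [eventually_ne_atTop 0] with n hn
    rw [norm_norm, norm_psiSummand h q hs0 hn]
  have hlog (p : Nat.Primes) :
      -log (1 - f p) = ∑' k : ℕ,
        exp (2 * π * I * ((p : ℕ) : ℂ) * h * ((k : ℂ) + 1) / q) / primePowerDen s p k := by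
    have hf : ‖f p‖ < 1 := by
      rw [norm_psiSummand h q hs0 p.prop.ne_zero]
      exact Real.rpow_lt_one_of_one_lt_of_neg (by exact_mod_cast p.prop.one_lt) (by linarith)
    rw [← (hasSum_taylorSeries_neg_log' hf).tsum_eq]
    refine tsum_congr fun k ↦ ?_
    simp only [f, psiSummand, MonoidWithZeroHom.coe_mk, ZeroHom.coe_mk, primePowerDen, div_pow,
      div_div, ← cpow_nat_mul, psiA, Apd_prime p.prop, ← exp_nat_mul]
    push_cast
    ring_nf
  rw [show Lpsi h q s = ∑' n, f n from rfl, ← EulerProduct.exp_tsum_primes_log_eq_tsum hsum,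
    tsum_congr hlog]
  rfl

lemma sum_range_exp_eq_ite {m : ℕ} (hm : m ≠ 0) :
    ∑ j ∈ range m, exp (2 * π * I * j / m) = if m = 1 then 1 else 0 := by
  have hpow (j : ℕ) : exp (2 * π * I * j / m) = exp (2 * π * I / m) ^ j := by
    rw [← Complex.exp_nat_mul]; ring_nf
  simp only [hpow]
  split_ifs with h1
  · simp [h1]
  · exact (Complex.isPrimitiveRoot_exp m hm).geom_sum_eq_zero (by omega)

lemma sum_range_filter_dvd_exp {d q : ℕ} (hq : q ≠ 0) (hd : d ∣ q) :
    ∑ l ∈ (range q).filter (d ∣ ·), exp (2 * π * I * l / q) = if d = q then 1 else 0 := by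
  obtain ⟨m, rfl⟩ := hd
  have hd0 : d ≠ 0 := left_ne_zero_of_mul hq
  have hm0 : m ≠ 0 := right_ne_zero_of_mul hq
  have himage : (range (d * m)).filter (d ∣ ·)
      = (range m).map ⟨(d * ·), mul_right_injective₀ hd0⟩ := by
    ext l
    simp only [mem_filter, mem_range, Finset.mem_map, Function.Embedding.coeFn_mk]
    constructor
    · rintro ⟨hl, j, rfl⟩
      exact ⟨j, Nat.lt_of_mul_lt_mul_left hl, rfl⟩
    · rintro ⟨j, hj, rfl⟩
      exact ⟨Nat.mul_lt_mul_of_pos_left hj (Nat.pos_of_ne_zero hd0), dvd_mul_right d j⟩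
  have hexp (j : ℕ) : exp (2 * π * I * ((d * j : ℕ) : ℂ) / ((d * m : ℕ) : ℂ))
      = exp (2 * π * I * j / m) := by
    congr 1
    push_cast
    field_simp
  rw [himage, sum_map]
  simp only [Function.Embedding.coeFn_mk, hexp]
  rw [sum_range_exp_eq_ite hm0]
  simp [hd0]

lemma sum_divisors_moebius_eq_ite (n : ℕ) :
    ∑ d ∈ n.divisors, (ArithmeticFunction.moebius d : ℂ) = if n = 1 then 1 else 0 := by
  have := congrArg (fun f : ArithmeticFunction ℂ ↦ f n)
    (ArithmeticFunction.coe_moebius_mul_coe_zeta (R := ℂ))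
  simpa only [ArithmeticFunction.coe_mul_zeta_apply, ArithmeticFunction.one_apply,
    ArithmeticFunction.intCoe_apply] using this

lemma gaussS_one (q : ℕ) [NeZero q] :
    gaussS (1 : DirichletCharacter ℂ q) = ArithmeticFunction.moebius q := by
  have hq := NeZero.ne q
  have hone (l : ℕ) : (1 : DirichletCharacter ℂ q) l
      = ∑ d ∈ q.divisors, if d ∣ l then (ArithmeticFunction.moebius d : ℂ) else 0 := by
    have hdiv : (l.gcd q).divisors = q.divisors.filter (· ∣ l) := by
      ext d
      simp only [Nat.mem_divisors, mem_filter, Nat.dvd_gcd_iff]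
      exact ⟨fun ⟨⟨hl, hq'⟩, _⟩ ↦ ⟨⟨hq', hq⟩, hl⟩,
        fun ⟨⟨hq', _⟩, hl⟩ ↦ ⟨⟨hl, hq'⟩, Nat.gcd_ne_zero_right hq⟩⟩
    rw [← sum_filter, ← hdiv, sum_divisors_moebius_eq_ite]
    by_cases hu : IsUnit (l : ZMod q)
    · rw [MulChar.one_apply hu, if_pos ((ZMod.isUnit_iff_coprime l q).mp hu)]
    · rw [MulChar.map_nonunit _ hu, if_neg fun h ↦ hu ((ZMod.isUnit_iff_coprime l q).mpr h)]
  calc gaussS (1 : DirichletCharacter ℂ q)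
      = ∑ d ∈ q.divisors, (ArithmeticFunction.moebius d : ℂ)
          * ∑ l ∈ (range q).filter (d ∣ ·), exp (2 * π * I * l / q) := by
        simp only [gaussS, hone, sum_mul, ite_mul, zero_mul, mul_sum, sum_filter, mul_ite, mul_zero]
        exact sum_comm
    _ = ∑ d ∈ q.divisors, (ArithmeticFunction.moebius d : ℂ) * if d = q then 1 else 0 :=
        sum_congr rfl fun d hd ↦ by rw [sum_range_filter_dvd_exp hq (Nat.dvd_of_mem_divisors hd)]
    _ = ArithmeticFunction.moebius q := by
        simp [hq]

lemma gaussS_eq_sum_stdAddChar {q : ℕ} [NeZero q] (χ : DirichletCharacter ℂ q) :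
    gaussS χ = ∑ a : ZMod q, χ a * ZMod.stdAddChar a := by
  refine sum_nbij' (fun l ↦ (l : ZMod q)) ZMod.val (by simp) (fun a _ ↦ by simpa using a.val_lt)
    (fun l hl ↦ ZMod.val_cast_of_lt (mem_range.mp hl)) (fun a _ ↦ ZMod.natCast_zmod_val a)
    fun l _ ↦ ?_
  simpa using congrArg (χ l * ·) (ZMod.stdAddChar_coe (N := q) l).symm

lemma sum_gaussS_mul_conj {q : ℕ} [NeZero q] {a : ZMod q} (ha : IsUnit a) :
    ∑ χ : DirichletCharacter ℂ q, gaussS χ * starRingEnd ℂ (χ a)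
      = q.totient * ZMod.stdAddChar a := by
  have hconj (χ : DirichletCharacter ℂ q) : starRingEnd ℂ (χ a) = χ a⁻¹ := by
    rw [← RCLike.star_def, MulChar.star_apply', MulChar.inv_apply_eq_inv', eq_comm]
    exact eq_inv_of_mul_eq_one_left (by rw [← map_mul, ZMod.inv_mul_of_unit a ha, map_one])
  calc ∑ χ : DirichletCharacter ℂ q, gaussS χ * starRingEnd ℂ (χ a)
      = ∑ b : ZMod q, (∑ χ : DirichletCharacter ℂ q, χ a⁻¹ * χ b) * ZMod.stdAddChar b := by
        simp only [gaussS_eq_sum_stdAddChar, hconj, sum_mul]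
        rw [sum_comm]
        exact sum_congr rfl fun b _ ↦ sum_congr rfl fun χ _ ↦ by ring
    _ = q.totient * ZMod.stdAddChar a := by
        simp [DirichletCharacter.sum_char_inv_mul_char_eq ℂ ha]

lemma exp_eq_sum_gaussS {q : ℕ} [NeZero q] {x : ℤ} (hx : IsUnit (x : ZMod q)) :
    exp (2 * π * I * x / q)
      = ∑ χ ∈ univ.filter fun χ : DirichletCharacter ℂ q => χ ≠ 1,
          gaussS χ * starRingEnd ℂ (χ x) / q.totient
        + ArithmeticFunction.moebius q / q.totient := by
  have hφ : (q.totient : ℂ) ≠ 0 := by exact_mod_cast (Nat.totient_pos.2 (NeZero.pos q)).ne'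
  rw [← ZMod.stdAddChar_coe, ← sum_div, ← add_div, eq_div_iff hφ, mul_comm,
    ← sum_gaussS_mul_conj hx, filter_ne', ← add_sum_erase _ _ (mem_univ 1), add_comm,
    gaussS_one, MulChar.one_apply hx, map_one, mul_one]

section decomposition

variable (h : ℤ) (q : ℕ)

lemma exp_mul_prime_pow_eq [NeZero q] (hcop : IsCoprime h q) (p : Nat.Primes) (k : ℕ) :
    exp (2 * π * I * h * ((p : ℕ) : ℂ) ^ (k + 1) / q)
      = ∑ χ ∈ univ.filter fun χ : DirichletCharacter ℂ q => χ ≠ 1,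
          gaussS χ * starRingEnd ℂ (χ h) / q.totient * conjChar χ p ^ (k + 1)
        + ArithmeticFunction.moebius q / q.totient
        + if (p : ℕ) ∣ q then exp (2 * π * I * h * ((p : ℕ) : ℂ) ^ (k + 1) / q)
            - ArithmeticFunction.moebius q / q.totient else 0 := by
  split_ifs with hpq
  · have hzero (χ : DirichletCharacter ℂ q) : conjChar χ p = 0 :=
      MulChar.map_nonunit _ fun hu ↦ (ZMod.isUnit_prime_iff_not_dvd p.prop).mp hu hpq
    simp [hzero]
  · have hx : IsUnit ((h * (p : ℤ) ^ (k + 1) : ℤ) : ZMod q) := by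
      push_cast
      exact ((ZMod.coe_int_isUnit_iff_isCoprime h q).2 hcop.symm).mul
        (((ZMod.isUnit_prime_iff_not_dvd p.prop).2 hpq).pow _)
    have harg : 2 * π * I * h * ((p : ℕ) : ℂ) ^ (k + 1)
        = 2 * π * I * ((h * (p : ℤ) ^ (k + 1) : ℤ) : ℂ) := by
      push_cast; ring
    rw [add_zero, harg, exp_eq_sum_gaussS hx]
    congr 1
    refine sum_congr rfl fun χ _ ↦ ?_
    simp only [conjChar, MulChar.ringHomComp_apply, Int.cast_mul, Int.cast_pow, Int.cast_natCast,
      map_mul, map_pow]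
    ring

noncomputable def primeFactorsPart (s : ℂ) : ℂ :=
  ∑ p ∈ q.primeFactors, ∑' k : ℕ,
    (exp (2 * π * I * h * (p : ℂ) ^ (k + 1) / q) - ArithmeticFunction.moebius q / q.totient)
      / primePowerDen s p k

variable {s : ℂ} (hs : 1 < s.re)
include hs

lemma plogPsi_eq_plogPsiAlt_add_Thq :
    plogPsi h q s = plogPsiAlt h q s + Thq h q s := by
  set e : Nat.Primes → ℕ → ℂ := fun p k ↦ exp (2 * π * I * h * ((p : ℕ) : ℂ) ^ (k + 1) / q)
  set t : Nat.Primes → ℕ → ℂ := fun p k ↦ exp (2 * π * I * ((p : ℕ) : ℂ) * h * ((k : ℂ) + 1) / q)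
    - exp (2 * π * I * ((p : ℕ) : ℂ) ^ (k + 1) * h / q)
  have he (p k) : ‖e p k‖ = 1 := by
    simp [e, Complex.norm_exp, Complex.div_re, ← ofReal_natCast, ← ofReal_pow]
  have ht (p k) : ‖t p k‖ ≤ 2 := by
    refine (norm_sub_le _ _).trans_eq ?_
    norm_num [Complex.norm_exp, Complex.div_re, ← ofReal_natCast, ← ofReal_pow]
  have hThq : Thq h q s = primePowerSum s t := by
    refine tsum_congr fun p ↦ ?_
    rw [(summable_div_primePowerDen hs.le p.prop.two_le (ht p)).tsum_eq_zero_add,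
      show t p 0 = 0 by simp [t], zero_div, zero_add]
    refine tsum_congr fun k ↦ ?_
    simp only [t, primePowerDen]
    push_cast
    ring_nf
  calc plogPsi h q s = primePowerSum s fun p k ↦ e p k + t p k :=
        tsum_congr fun p ↦ tsum_congr fun k ↦ by
          simp only [e, t, primePowerDen]
          ring_nf
    _ = plogPsiAlt h q s + Thq h q s := by
      rw [primePowerSum_add (primePowerSummable_of_norm_le hs fun p k ↦ (he p k).le)
        (primePowerSummable_of_norm_le hs ht), hThq]
      rfl

lemma plogPsiAlt_eq [NeZero q] (hcop : IsCoprime h q) :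
    plogPsiAlt h q s
      = ∑ χ ∈ univ.filter fun χ : DirichletCharacter ℂ q => χ ≠ 1,
          gaussS χ * starRingEnd ℂ (χ h) / q.totient * plogChar (conjChar χ) s
        + ArithmeticFunction.moebius q / q.totient * plogZeta s + primeFactorsPart h q s := by
  set m : ℂ := ArithmeticFunction.moebius q / q.totient
  set c : DirichletCharacter ℂ q → ℂ := fun χ ↦ gaussS χ * starRingEnd ℂ (χ h) / q.totient
  set e : ℕ → ℕ → ℂ := fun p k ↦ exp (2 * π * I * h * (p : ℂ) ^ (k + 1) / q)
  have he (p k : ℕ) : ‖e p k‖ = 1 := by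
    simp [e, Complex.norm_exp, Complex.div_re, ← ofReal_natCast, ← ofReal_pow]
  have hχ (χ : DirichletCharacter ℂ q) :
      PrimePowerSummable s fun p k ↦ c χ * conjChar χ p ^ (k + 1) :=
    primePowerSummable_of_norm_le hs (C := ‖c χ‖) fun p k ↦ by
      rw [norm_mul, norm_pow]
      exact mul_le_of_le_one_right (norm_nonneg _)
        (pow_le_one₀ (norm_nonneg _) (DirichletCharacter.norm_le_one _ _))
  have hconst : PrimePowerSummable s fun _ _ ↦ m :=
    primePowerSummable_of_norm_le hs (C := ‖m‖) fun _ _ ↦ le_rfl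
  have hlocal : PrimePowerSummable s fun p k ↦ if (p : ℕ) ∣ q then e p k - m else 0 :=
    primePowerSummable_of_norm_le hs (C := 1 + ‖m‖) fun p k ↦ by
      split_ifs
      · exact (norm_sub_le _ _).trans (by rw [he])
      · simp only [norm_zero]; positivity
  have hlocalSum : primePowerSum s (fun p k ↦ if (p : ℕ) ∣ q then e p k - m else 0)
      = primeFactorsPart h q s :=
    primePowerSum_ite_dvd (NeZero.ne q) fun p k ↦ e p k - m
  calc plogPsiAlt h q s
      = primePowerSum s fun p k ↦ (∑ χ ∈ univ.filter fun χ ↦ χ ≠ 1,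
          c χ * conjChar χ p ^ (k + 1)) + m + if (p : ℕ) ∣ q then e p k - m else 0 :=
        tsum_congr fun p ↦ tsum_congr fun k ↦ by rw [exp_mul_prime_pow_eq h q hcop p k]; rfl
    _ = ∑ χ ∈ univ.filter fun χ ↦ χ ≠ 1, c χ * plogChar (conjChar χ) s
        + m * plogZeta s + primeFactorsPart h q s := by
      rw [primePowerSum_add ((PrimePowerSummable.sum fun χ _ ↦ hχ χ).add hconst) hlocal,
        primePowerSum_add (PrimePowerSummable.sum fun χ _ ↦ hχ χ) hconst,
        primePowerSum_sum fun χ _ ↦ hχ χ, hlocalSum, primePowerSum_const]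
      simp only [primePowerSum_const_mul]
      rfl

lemma Uhq_eq_add_Thq : Uhq h q s = primeFactorsPart h q s + Thq h q s := by
  rw [Uhq, primeFactorsPart, mul_sum, ← sum_add_distrib]
  congr 1
  refine sum_congr rfl fun p hp ↦ ?_
  have hp2 := (Nat.prime_of_mem_primeFactors hp).two_le
  rw [mphi, ← tsum_mul_left, ← Summable.tsum_add]
  · refine tsum_congr fun k ↦ ?_
    rw [primePowerDen]
    push_cast
    ring
  · exact (summable_div_primePowerDen hs.le hp2 (a := fun _ ↦ 1) (C := 1) (by simp)).mul_left _
  · exact summable_div_primePowerDen hs.le hp2 (C := 1) fun k ↦ by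
      simp [Complex.norm_exp, Complex.div_re, ← ofReal_natCast, ← ofReal_pow]

end decomposition

theorem stmt8_general (h : ℤ) (q : ℕ) [NeZero q] (hcop : IsCoprime h (q : ℤ))
    (s : ℂ) (hs : 1 < s.re) :
    Lpsi h q s
      = (∏ χ ∈ Finset.univ.filter fun χ : DirichletCharacter ℂ q => χ ≠ 1,
            Complex.exp
              ((gaussS χ * (starRingEnd ℂ) (χ ((h : ZMod q))) / (Nat.totient q : ℂ))
                * plogChar (conjChar χ) s))
          * Complex.exp (((ArithmeticFunction.moebius q : ℂ) / (Nat.totient q : ℂ)) * plogZeta s)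
          * Complex.exp (Uhq h q s) := by
  rw [Lpsi_eq_exp_plogPsi h q hs, plogPsi_eq_plogPsiAlt_add_Thq h q hs, plogPsiAlt_eq h q hs hcop,
    add_assoc, ← Uhq_eq_add_Thq h q hs, exp_add, exp_add, exp_sum]

theorem stmt8 (h : ℤ) (q : ℕ) [NeZero q] (hq : 2 < q) (hcop : IsCoprime h (q : ℤ))
    (s : ℂ) (hs : 1 < s.re) :
    Lpsi h q s
      = (∏ χ ∈ Finset.univ.filter fun χ : DirichletCharacter ℂ q => χ ≠ 1,
            Complex.exp
              ((gaussS χ * (starRingEnd ℂ) (χ ((h : ZMod q))) / (Nat.totient q : ℂ))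
                * plogChar (conjChar χ) s))
          * Complex.exp (((ArithmeticFunction.moebius q : ℂ) / (Nat.totient q : ℂ)) * plogZeta s)
          * Complex.exp (Uhq h q s) :=
  stmt8_general h q hcop s hs
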